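/- arXiv:1801.05653 — 3 statements merged into one kernel-verified Lean document; each statement's English description precedes it below -/
import Mathlib

section
/- Let Ω ⊆ ℝ^d be a nonempty bounded open set, μ > 0, and let K : closure(Ω) × closure(Ω) → ℝ be continuous and satisfy ∫_Ω K(x,y) dy = 1 for every x ∈ Ω. Let u : (0,∞) × closure(Ω) → ℝ be continuous with u(t,x) > 0 for all t, x, with continuous time derivative ∂_t u on (0,∞) × closure(Ω), twice continuously differentiable in x on Ω, satisfying ∂_t u(t,x) = μ (1 − ∫_Ω K(x,y) u(t,y) dy) u(t,x) + Δu(t,x) for all t > 0, x ∈ Ω, and satisfying for every t > 0 the integration-by-parts identity ∫_Ω Δ_x u(t,x)(1 − 1/u(t,x)) dx = −∫_Ω ‖∇_x u(t,x)‖²/u(t,x)² dx. Then the function g(t) := ∫_Ω (u(t,x) − 1 − log u(t,x)) dx is differentiable on (0,∞) with derivative g'(t) = −∫_Ω ‖∇_x u(t,x)‖²/u(t,x)² dx − μ ∬_{Ω×Ω} K(x,y)(1 − u(t,x))(1 − u(t,y)) dx dy. -/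
/-!
Differentiating under the integral sign, which is justified because `∂ₜH(u) = ∂ₜu (1 - 1/u)` is
continuous, hence bounded, on a compact cylinder `[t - ε, t + ε] × closure Ω`, gives
`V' = ∫_Ω ∂ₜu (1 - 1/u)`. Inserting the equation, the diffusion part is the integration-by-parts
term, while, since `∫_Ω K(x, ·) = 1`, the reaction part `μ (1 - ∫_Ω K(x, y) u(y) dy) (u(x) - 1)`
equals `-μ ∫_Ω K(x, y) (1 - u(x)) (1 - u(y)) dy`.
-/

open MeasureTheory Filter

/-- The Laplacian of a real-valued function on `EuclideanSpace ℝ (Fin d)`,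
as the sum of the second partial derivatives in the coordinate directions. -/
noncomputable def laplacian {d : ℕ} (u : EuclideanSpace ℝ (Fin d) → ℝ)
    (x : EuclideanSpace ℝ (Fin d)) : ℝ :=
  ∑ i : Fin d,
    fderiv ℝ (fun y => fderiv ℝ u y (EuclideanSpace.single i 1)) x (EuclideanSpace.single i 1)

open Set

section ParametricIntegral

variable {X : Type*} [TopologicalSpace X] [T2Space X] [MeasurableSpace X] [OpensMeasurableSpace X]
  {μ : Measure X} [IsFiniteMeasureOnCompacts μ] {C s : Set X}

theorem hasDerivAt_setIntegral_of_continuousOn_prod (hC : IsCompact C) (hsC : s ⊆ C)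
    {T : Set ℝ} (hT : IsOpen T) {F F' : ℝ → X → ℝ} {t : ℝ} (ht : t ∈ T)
    (hF : ∀ r ∈ T, ContinuousOn (F r) C)
    (hF' : ContinuousOn (fun p : ℝ × X => F' p.1 p.2) (T ×ˢ C))
    (hderiv : ∀ r ∈ T, ∀ x ∈ C, HasDerivAt (F · x) (F' r x) r) :
    IntegrableOn (F' t) s μ ∧
      HasDerivAt (fun r => ∫ x in s, F r x ∂μ) (∫ x in s, F' t x ∂μ) t := by
  obtain ⟨ε, hε, hεT⟩ := Metric.isOpen_iff.1 hT t ht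
  have hball : Metric.closedBall t (ε / 2) ⊆ T :=
    (Metric.closedBall_subset_ball (half_lt_self hε)).trans hεT
  have hF'_slice : ContinuousOn (F' t) C :=
    hF'.comp (Continuous.continuousOn (by fun_prop)) fun x hx => mk_mem_prod ht hx
  obtain ⟨M, hM⟩ := ((isCompact_closedBall t (ε / 2)).prod hC).exists_bound_of_continuousOn
    (hF'.mono (prod_mono hball subset_rfl))
  have hsC_ae : ∀ᵐ x ∂μ.restrict s, x ∈ C :=
    ae_mono (Measure.restrict_mono hsC le_rfl) (ae_restrict_mem hC.measurableSet)
  refine hasDerivAt_integral_of_dominated_loc_of_deriv_le (bound := fun _ => M)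
    (Metric.ball_mem_nhds t (half_pos hε)) ?_ ((hF t ht).integrableOn_compact hC |>.mono_set hsC)
    ((hF'_slice.integrableOn_compact hC).mono_set hsC).aestronglyMeasurable ?_
    (integrableOn_const (measure_mono hsC |>.trans_lt hC.measure_lt_top).ne) ?_
  · filter_upwards [hT.mem_nhds ht] with r hr
    exact ((hF r hr).integrableOn_compact hC |>.mono_set hsC).aestronglyMeasurable
  · filter_upwards [hsC_ae] with x hx r hr
    exact hM (r, x) (mk_mem_prod (Metric.ball_subset_closedBall hr) hx)
  · filter_upwards [hsC_ae] with x hx r hr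
    exact hderiv r (hball (Metric.ball_subset_closedBall hr)) x hx

theorem integrableOn_setIntegral_of_continuousOn_prod {Y : Type*} [TopologicalSpace Y]
    [T2Space Y] [MeasurableSpace Y] [OpensMeasurableSpace Y] [SecondCountableTopologyEither X Y]
    {ν : Measure Y} [IsFiniteMeasureOnCompacts ν] [SFinite μ] [SFinite ν] {D t : Set Y}
    (hC : IsCompact C) (hD : IsCompact D) (hsC : s ⊆ C) (htD : t ⊆ D) {f : X → Y → ℝ}
    (hf : ContinuousOn (fun p : X × Y => f p.1 p.2) (C ×ˢ D)) :
    IntegrableOn (fun x => ∫ y in t, f x y ∂ν) s μ := by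
  have h : IntegrableOn (fun p : X × Y => f p.1 p.2) (s ×ˢ t) (μ.prod ν) :=
    (hf.integrableOn_compact (hC.prod hD)).mono_set (prod_mono hsC htD)
  rw [IntegrableOn, ← Measure.prod_restrict] at h
  exact h.integral_prod_left

theorem hasDerivAt_setIntegral_sub_one_sub_log (hC : IsCompact C) (hsC : s ⊆ C)
    {u ut : ℝ → X → ℝ} (hu_cont : ContinuousOn (fun p : ℝ × X => u p.1 p.2) (Ioi 0 ×ˢ C))
    (hu_pos : ∀ t > (0 : ℝ), ∀ x ∈ C, 0 < u t x)
    (hut : ∀ t > (0 : ℝ), ∀ x ∈ C, HasDerivAt (fun s => u s x) (ut t x) t)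
    (hut_cont : ContinuousOn (fun p : ℝ × X => ut p.1 p.2) (Ioi 0 ×ˢ C)) {t : ℝ} (ht : 0 < t) :
    IntegrableOn (fun x => ut t x * (1 - 1 / u t x)) s μ ∧
      HasDerivAt (fun s' => ∫ x in s, (u s' x - 1 - Real.log (u s' x)) ∂μ)
        (∫ x in s, ut t x * (1 - 1 / u t x) ∂μ) t := by
  have hslice : ∀ r > (0 : ℝ), ContinuousOn (u r) C := fun r hr =>
    hu_cont.comp (Continuous.continuousOn (by fun_prop)) fun x hx => mk_mem_prod hr hx
  exact hasDerivAt_setIntegral_of_continuousOn_prod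
    (F := fun r x => u r x - 1 - Real.log (u r x)) (F' := fun r x => ut r x * (1 - 1 / u r x))
    hC hsC isOpen_Ioi ht
    (fun r hr => ((hslice r hr).sub continuousOn_const).sub
      ((hslice r hr).log fun x hx => (hu_pos r hr x hx).ne'))
    (hut_cont.mul (continuousOn_const.sub
      (continuousOn_const.div hu_cont fun p hp => (hu_pos p.1 hp.1 p.2 hp.2).ne')))
    fun r hr x hx =>
      (((hut r hr x hx).sub_const 1).sub ((hut r hr x hx).log (hu_pos r hr x hx).ne')).congr_deriv
        (by ring)

end ParametricIntegral

theorem integral_mul_one_sub_mul_one_sub_of_integral_eq_one {α : Type*} [MeasurableSpace α]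
    {μ : Measure α} {k v : α → ℝ} (a : ℝ) (hk : Integrable k μ)
    (hkv : Integrable (fun y => k y * v y) μ) (hk1 : ∫ y, k y ∂μ = 1) :
    ∫ y, k y * (1 - a) * (1 - v y) ∂μ = (1 - a) * (1 - ∫ y, k y * v y ∂μ) := by
  calc ∫ y, k y * (1 - a) * (1 - v y) ∂μ = ∫ y, (1 - a) * (k y - k y * v y) ∂μ :=
        integral_congr_ae (Eventually.of_forall fun y => by ring)
    _ = (1 - a) * (1 - ∫ y, k y * v y ∂μ) := by
        rw [integral_const_mul, integral_sub hk hkv, hk1]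

theorem lyapunov_dissipation_identity_general
    {d : ℕ} (Ω : Set (EuclideanSpace ℝ (Fin d)))
    (hΩopen : IsOpen Ω) (hΩbdd : Bornology.IsBounded Ω)
    (μ : ℝ)
    (K : EuclideanSpace ℝ (Fin d) → EuclideanSpace ℝ (Fin d) → ℝ)
    (hKcont : ContinuousOn (fun p : EuclideanSpace ℝ (Fin d) × EuclideanSpace ℝ (Fin d) =>
      K p.1 p.2) (closure Ω ×ˢ closure Ω))
    (hKnorm : ∀ x ∈ Ω, ∫ y in Ω, K x y = 1)
    (u ut : ℝ → EuclideanSpace ℝ (Fin d) → ℝ)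
    (hu_cont : ContinuousOn (fun p : ℝ × EuclideanSpace ℝ (Fin d) => u p.1 p.2)
      (Set.Ioi 0 ×ˢ closure Ω))
    (hu_pos : ∀ t > (0 : ℝ), ∀ x ∈ closure Ω, 0 < u t x)
    (hut : ∀ t > (0 : ℝ), ∀ x ∈ closure Ω, HasDerivAt (fun s => u s x) (ut t x) t)
    (hut_cont : ContinuousOn (fun p : ℝ × EuclideanSpace ℝ (Fin d) => ut p.1 p.2)
      (Set.Ioi 0 ×ˢ closure Ω))
    (hPDE : ∀ t > (0 : ℝ), ∀ x ∈ Ω,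
      ut t x = μ * (1 - ∫ y in Ω, K x y * u t y) * u t x + laplacian (u t) x)
    (hNeumann : ∀ t > (0 : ℝ),
      ∫ x in Ω, laplacian (u t) x * (1 - 1 / u t x)
        = -∫ x in Ω, ‖gradient (u t) x‖ ^ 2 / (u t x) ^ 2) :
    ∀ t > (0 : ℝ),
      HasDerivAt (fun s => ∫ x in Ω, (u s x - 1 - Real.log (u s x)))
        (-(∫ x in Ω, ‖gradient (u t) x‖ ^ 2 / (u t x) ^ 2)
          - μ * ∫ x in Ω, ∫ y in Ω, K x y * (1 - u t x) * (1 - u t y)) t := by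
  intro t ht
  have hΩc : IsCompact (closure Ω) := hΩbdd.isCompact_closure
  obtain ⟨hf_int, hV⟩ := hasDerivAt_setIntegral_sub_one_sub_log (μ := volume) hΩc subset_closure
    hu_cont hu_pos hut hut_cont ht
  have hut_slice : ContinuousOn (u t) (closure Ω) :=
    hu_cont.comp (Continuous.continuousOn (by fun_prop)) fun x hx => mk_mem_prod ht hx
  set D := fun x => ∫ y in Ω, K x y * (1 - u t x) * (1 - u t y) with hD
  have hD_int : IntegrableOn D Ω :=
    integrableOn_setIntegral_of_continuousOn_prod hΩc hΩc subset_closure subset_closure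
      (hKcont.mul (continuousOn_const.sub (hut_slice.comp continuousOn_fst fun p hp => hp.1))
        |>.mul (continuousOn_const.sub (hut_slice.comp continuousOn_snd fun p hp => hp.2)))
  have hpointwise : ∀ x ∈ Ω,
      laplacian (u t) x * (1 - 1 / u t x) = ut t x * (1 - 1 / u t x) + μ * D x := by
    intro x hx
    have hKx : ContinuousOn (K x) (closure Ω) := hKcont.comp
      (Continuous.continuousOn (by fun_prop)) fun y hy => mk_mem_prod (subset_closure hx) hy
    have hux : u t x ≠ 0 := (hu_pos t ht x (subset_closure hx)).ne'
    simp only [hD]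
    rw [integral_mul_one_sub_mul_one_sub_of_integral_eq_one (u t x)
      ((hKx.integrableOn_compact hΩc).mono_set subset_closure)
      (((hKx.mul hut_slice).integrableOn_compact hΩc).mono_set subset_closure) (hKnorm x hx),
      hPDE t ht x hx]
    field_simp
    ring
  refine hV.congr_deriv ?_
  calc (∫ x in Ω, ut t x * (1 - 1 / u t x))
      = (∫ x in Ω, (ut t x * (1 - 1 / u t x) + μ * D x)) - μ * ∫ x in Ω, D x := by
        rw [integral_add hf_int (hD_int.const_mul μ), integral_const_mul]; ring
    _ = -(∫ x in Ω, ‖gradient (u t) x‖ ^ 2 / (u t x) ^ 2) - μ * ∫ x in Ω, D x := by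
        rw [← setIntegral_congr_fun hΩopen.measurableSet hpointwise, hNeumann t ht]

/-- The dissipation identity for the Lyapunov functional
`V(u) = ∫_Ω (u - 1 - log u)` along solutions of the non-local Fisher-KPP equation. -/
theorem lyapunov_dissipation_identity
    {d : ℕ} (Ω : Set (EuclideanSpace ℝ (Fin d)))
    (hΩopen : IsOpen Ω) (hΩbdd : Bornology.IsBounded Ω) (hΩne : Ω.Nonempty)
    (μ : ℝ) (hμ : 0 < μ)
    (K : EuclideanSpace ℝ (Fin d) → EuclideanSpace ℝ (Fin d) → ℝ)
    (hKcont : ContinuousOn (fun p : EuclideanSpace ℝ (Fin d) × EuclideanSpace ℝ (Fin d) =>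
      K p.1 p.2) (closure Ω ×ˢ closure Ω))
    (hKnorm : ∀ x ∈ Ω, ∫ y in Ω, K x y = 1)
    (u ut : ℝ → EuclideanSpace ℝ (Fin d) → ℝ)
    (hu_cont : ContinuousOn (fun p : ℝ × EuclideanSpace ℝ (Fin d) => u p.1 p.2)
      (Set.Ioi 0 ×ˢ closure Ω))
    (hu_pos : ∀ t > (0 : ℝ), ∀ x ∈ closure Ω, 0 < u t x)
    (hut : ∀ t > (0 : ℝ), ∀ x ∈ closure Ω, HasDerivAt (fun s => u s x) (ut t x) t)
    (hut_cont : ContinuousOn (fun p : ℝ × EuclideanSpace ℝ (Fin d) => ut p.1 p.2)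
      (Set.Ioi 0 ×ˢ closure Ω))
    (hu_smooth : ∀ t > (0 : ℝ), ContDiffOn ℝ 2 (u t) Ω)
    (hPDE : ∀ t > (0 : ℝ), ∀ x ∈ Ω,
      ut t x = μ * (1 - ∫ y in Ω, K x y * u t y) * u t x + laplacian (u t) x)
    (hNeumann : ∀ t > (0 : ℝ),
      ∫ x in Ω, laplacian (u t) x * (1 - 1 / u t x)
        = -∫ x in Ω, ‖gradient (u t) x‖ ^ 2 / (u t x) ^ 2) :
    ∀ t > (0 : ℝ),
      HasDerivAt (fun s => ∫ x in Ω, (u s x - 1 - Real.log (u s x)))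
        (-(∫ x in Ω, ‖gradient (u t) x‖ ^ 2 / (u t x) ^ 2)
          - μ * ∫ x in Ω, ∫ y in Ω, K x y * (1 - u t x) * (1 - u t y)) t :=
  lyapunov_dissipation_identity_general Ω hΩopen hΩbdd μ K hKcont hKnorm u ut hu_cont hu_pos hut
    hut_cont hPDE hNeumann
end

section
/- Let Ω ⊆ ℝ^d be a nonempty bounded open set, μ > 0, and let K : closure(Ω) × closure(Ω) → ℝ be continuous, satisfy ∫_Ω K(x,y) dy = 1 for every x ∈ Ω, and satisfy the positivity condition ∬_{Ω×Ω} K(x,y) f(x) f(y) dx dy ≥ 0 for every f ∈ L²(Ω). Let u : (0,∞) × closure(Ω) → ℝ be continuous, positive, with continuous time derivative ∂_t u on (0,∞) × closure(Ω), twice continuously differentiable in x on Ω, satisfying ∂_t u = μ (1 − ∫_Ω K(x,y) u(t,y) dy) u + Δu on (0,∞) × Ω, and satisfying for every t > 0 the identity ∫_Ω Δ_x u(t,x)(1 − 1/u(t,x)) dx = −∫_Ω ‖∇_x u(t,x)‖²/u(t,x)² dx. Then t ↦ ∫_Ω (u(t,x) − 1 − log u(t,x)) dx is non-increasing on (0,∞).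 -/
/-!
Along a solution, `d/dt ∫ (u - 1 - log u) = ∫ ∂ₜu (1 - 1/u)`. Substituting the equation splits
this into `μ ∫ (1 - K u) (u - 1)`, which the normalisation `∫ K(x, ·) = 1` turns into
`-μ ∬ K(x,y) (u(x) - 1) (u(y) - 1) ≤ 0`, and `∫ Δu (1 - 1/u) = -∫ ‖∇u‖²/u² ≤ 0`.
Differentiating under the integral sign is legitimate because `∂ₜu (1 - 1/u)` is jointly
continuous, hence bounded on compact time intervals times `closure Ω`.
-/

open MeasureTheory Filter

open Set Function

section CompactClosure

variable {X : Type*} [TopologicalSpace X] [MeasurableSpace X]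
  {ν : Measure X} [IsFiniteMeasureOnCompacts ν] {Ω : Set X}

theorem isFiniteMeasure_restrict_of_isCompact_closure (hΩ : IsCompact (closure Ω)) :
    IsFiniteMeasure (ν.restrict Ω) :=
  isFiniteMeasure_restrict.2 ((measure_mono subset_closure).trans_lt hΩ.measure_lt_top).ne

variable [OpensMeasurableSpace X]

theorem ContinuousOn.integrableOn_of_isCompact_closure {E : Type*} [NormedAddCommGroup E]
    {f : X → E} (hΩ : IsCompact (closure Ω)) (hf : ContinuousOn f (closure Ω)) :
    IntegrableOn f Ω ν :=
  (hf.integrableOn_compact' hΩ isClosed_closure.measurableSet).mono_set subset_closure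

theorem ContinuousOn.memLp_of_isCompact_closure {E : Type*} [NormedAddCommGroup E]
    {f : X → E} (hΩ : IsCompact (closure Ω)) (hΩm : MeasurableSet Ω)
    (hf : ContinuousOn f (closure Ω)) (p : ENNReal) : MemLp f p (ν.restrict Ω) := by
  have := isFiniteMeasure_restrict_of_isCompact_closure (ν := ν) hΩ
  obtain ⟨C, hC⟩ := hΩ.exists_bound_of_continuousOn hf
  exact MemLp.of_bound (hf.integrableOn_of_isCompact_closure hΩ).aestronglyMeasurable C
    ((ae_restrict_iff' hΩm).2 (Eventually.of_forall fun x hx => hC x (subset_closure hx)))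

theorem continuousOn_setIntegral_of_continuousOn_prod [FirstCountableTopology X]
    {K : X → X → ℝ} (hΩ : IsCompact (closure Ω)) (hΩm : MeasurableSet Ω)
    (hK : ContinuousOn (uncurry K) (closure Ω ×ˢ closure Ω)) :
    ContinuousOn (fun x => ∫ y in Ω, K x y ∂ν) (closure Ω) := by
  have := isFiniteMeasure_restrict_of_isCompact_closure (ν := ν) hΩ
  obtain ⟨C, hC⟩ := (hΩ.prod hΩ).exists_bound_of_continuousOn hK
  refine continuousOn_of_dominated (bound := fun _ => C)
    (fun x hx => ((hK.uncurry_left x hx).integrableOn_of_isCompact_closure hΩ).1)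
    (fun x hx => (ae_restrict_iff' hΩm).2 (Eventually.of_forall fun y hy =>
      hC (x, y) ⟨hx, subset_closure hy⟩))
    (integrable_const C)
    ((ae_restrict_iff' hΩm).2 (Eventually.of_forall fun y hy =>
      hK.uncurry_right y (subset_closure hy)))

theorem hasDerivAt_setIntegral_of_continuousOn_prod_s2 {F F' : ℝ → X → ℝ} {U : Set ℝ}
    (hU : IsOpen U) (hΩ : IsCompact (closure Ω)) (hΩm : MeasurableSet Ω)
    (hF : ContinuousOn (uncurry F) (U ×ˢ closure Ω))
    (hF' : ContinuousOn (uncurry F') (U ×ˢ closure Ω))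
    (hFF' : ∀ t ∈ U, ∀ x ∈ Ω, HasDerivAt (F · x) (F' t x) t) {t : ℝ} (ht : t ∈ U) :
    HasDerivAt (fun s => ∫ x in Ω, F s x ∂ν) (∫ x in Ω, F' t x ∂ν) t := by
  have := isFiniteMeasure_restrict_of_isCompact_closure (ν := ν) hΩ
  obtain ⟨r, hr, hrU⟩ := Metric.isOpen_iff.1 hU t ht
  have hsub : Metric.closedBall t (r / 2) ⊆ U :=
    (Metric.closedBall_subset_ball (by linarith)).trans hrU
  obtain ⟨M, hM⟩ := ((isCompact_closedBall t (r / 2)).prod hΩ).exists_bound_of_continuousOn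
    (hF'.mono (prod_mono hsub subset_rfl))
  refine (hasDerivAt_integral_of_dominated_loc_of_deriv_le (bound := fun _ => M)
    (Metric.ball_mem_nhds t (half_pos hr))
    (eventually_of_mem (hU.mem_nhds ht) fun s hs =>
      ((hF.uncurry_left s hs).integrableOn_of_isCompact_closure hΩ).1)
    ((hF.uncurry_left t ht).integrableOn_of_isCompact_closure hΩ)
    ((hF'.uncurry_left t ht).integrableOn_of_isCompact_closure hΩ).1
    ((ae_restrict_iff' hΩm).2 (Eventually.of_forall fun x hx s hs =>
      hM (s, x) ⟨Metric.ball_subset_closedBall hs, subset_closure hx⟩))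
    (integrable_const M)
    ((ae_restrict_iff' hΩm).2 (Eventually.of_forall fun x hx s hs =>
      hFF' s (hsub (Metric.ball_subset_closedBall hs)) x hx))).2

end CompactClosure

theorem one_sub_integral_mul_mul_eq {α : Type*} [MeasurableSpace α] {ρ : Measure α}
    {k v : α → ℝ} (hk : Integrable k ρ) (hkv : Integrable (fun y => k y * v y) ρ)
    (hk1 : ∫ y, k y ∂ρ = 1) (c : ℝ) :
    (1 - ∫ y, k y * v y ∂ρ) * c = -∫ y, k y * c * (v y - 1) ∂ρ := by
  have hexpand : ∫ y, k y * c * (v y - 1) ∂ρ = c * ((∫ y, k y * v y ∂ρ) - ∫ y, k y ∂ρ) := by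
    rw [← integral_sub hkv hk, ← integral_const_mul]
    congr 1 with y
    ring
  rw [hexpand, hk1]
  ring

section Kernel

variable {X : Type*} [TopologicalSpace X] [MeasurableSpace X]
  [OpensMeasurableSpace X] {ν : Measure X} [IsFiniteMeasureOnCompacts ν] {Ω : Set X}
  {K : X → X → ℝ}

theorem setIntegral_one_sub_integral_mul_eq (hΩ : IsCompact (closure Ω))
    (hΩm : MeasurableSet Ω) (hK : ContinuousOn (uncurry K) (closure Ω ×ˢ closure Ω))
    (hK1 : ∀ x ∈ Ω, ∫ y in Ω, K x y ∂ν = 1) {v : X → ℝ} (hv : ContinuousOn v (closure Ω)) :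
    ∫ x in Ω, (1 - ∫ y in Ω, K x y * v y ∂ν) * (v x - 1) ∂ν
      = -∫ x in Ω, ∫ y in Ω, K x y * (v x - 1) * (v y - 1) ∂ν ∂ν := by
  rw [← integral_neg]
  refine setIntegral_congr_fun hΩm fun x hx => ?_
  have hKx := hK.uncurry_left x (subset_closure hx)
  exact one_sub_integral_mul_mul_eq (hKx.integrableOn_of_isCompact_closure hΩ)
    ((hKx.mul hv).integrableOn_of_isCompact_closure hΩ) (hK1 x hx) _

theorem setIntegral_sub_div_nonpos [FirstCountableTopology X] (hΩ : IsCompact (closure Ω))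
    (hΩm : MeasurableSet Ω) (hK : ContinuousOn (uncurry K) (closure Ω ×ˢ closure Ω))
    (hK1 : ∀ x ∈ Ω, ∫ y in Ω, K x y ∂ν = 1) {μ : ℝ} (hμ : 0 ≤ μ) {v w L : X → ℝ}
    (hKv : 0 ≤ ∫ x in Ω, ∫ y in Ω, K x y * (v x - 1) * (v y - 1) ∂ν ∂ν)
    (hv : ContinuousOn v (closure Ω)) (hv_pos : ∀ x ∈ closure Ω, 0 < v x)
    (hw : ContinuousOn w (closure Ω))
    (hvw : ∀ x ∈ Ω, w x = μ * (1 - ∫ y in Ω, K x y * v y ∂ν) * v x + L x)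
    (hL : ∫ x in Ω, L x * (1 - 1 / v x) ∂ν ≤ 0) :
    ∫ x in Ω, (w x - w x / v x) ∂ν ≤ 0 := by
  set I : X → ℝ := fun x => ∫ y in Ω, K x y * v y ∂ν
  have hI : ContinuousOn I (closure Ω) :=
    continuousOn_setIntegral_of_continuousOn_prod hΩ hΩm
      (hK.mul (hv.comp continuousOn_snd fun _ hp => hp.2))
  have hreaction_int : IntegrableOn (fun x => μ * ((1 - I x) * (v x - 1))) Ω ν :=
    ((continuousOn_const.sub hI).mul (hv.sub continuousOn_const)).const_mul μ
      |>.integrableOn_of_isCompact_closure hΩ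
  have hdecomp : ∀ x ∈ Ω,
      w x - w x / v x = μ * ((1 - I x) * (v x - 1)) + L x * (1 - 1 / v x) := by
    intro x hx
    have hvx : v x ≠ 0 := (hv_pos x (subset_closure hx)).ne'
    rw [hvw x hx]
    field_simp
    ring
  have hdiffusion_int : IntegrableOn (fun x => L x * (1 - 1 / v x)) Ω ν := by
    refine ((hw.sub (hw.div hv fun x hx => (hv_pos x hx).ne')).integrableOn_of_isCompact_closure
      hΩ |>.sub hreaction_int).congr_fun (fun x hx => ?_) hΩm
    simp only [Pi.sub_apply, Pi.div_apply]
    linarith [hdecomp x hx]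
  calc ∫ x in Ω, (w x - w x / v x) ∂ν
      = μ * ∫ x in Ω, (1 - I x) * (v x - 1) ∂ν + ∫ x in Ω, L x * (1 - 1 / v x) ∂ν := by
        rw [setIntegral_congr_fun hΩm hdecomp, integral_add hreaction_int hdiffusion_int,
          integral_const_mul]
    _ = -(μ * ∫ x in Ω, ∫ y in Ω, K x y * (v x - 1) * (v y - 1) ∂ν ∂ν)
          + ∫ x in Ω, L x * (1 - 1 / v x) ∂ν := by
        rw [setIntegral_one_sub_integral_mul_eq hΩ hΩm hK hK1 hv]
        ring
    _ ≤ 0 := by linarith [mul_nonneg hμ hKv]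

end Kernel

theorem lyapunov_antitone_general
    {d : ℕ} (Ω : Set (EuclideanSpace ℝ (Fin d)))
    (hΩopen : IsOpen Ω) (hΩbdd : Bornology.IsBounded Ω)
    (μ : ℝ) (hμ : 0 < μ)
    (K : EuclideanSpace ℝ (Fin d) → EuclideanSpace ℝ (Fin d) → ℝ)
    (hKcont : ContinuousOn (fun p : EuclideanSpace ℝ (Fin d) × EuclideanSpace ℝ (Fin d) =>
      K p.1 p.2) (closure Ω ×ˢ closure Ω))
    (hKnorm : ∀ x ∈ Ω, ∫ y in Ω, K x y = 1)
    (hKposdef : ∀ f : EuclideanSpace ℝ (Fin d) → ℝ, MemLp f 2 (volume.restrict Ω) →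
      0 ≤ ∫ x in Ω, ∫ y in Ω, K x y * f x * f y)
    (u ut : ℝ → EuclideanSpace ℝ (Fin d) → ℝ)
    (hu_cont : ContinuousOn (fun p : ℝ × EuclideanSpace ℝ (Fin d) => u p.1 p.2)
      (Set.Ioi 0 ×ˢ closure Ω))
    (hu_pos : ∀ t > (0 : ℝ), ∀ x ∈ closure Ω, 0 < u t x)
    (hut : ∀ t > (0 : ℝ), ∀ x ∈ closure Ω, HasDerivAt (fun s => u s x) (ut t x) t)
    (hut_cont : ContinuousOn (fun p : ℝ × EuclideanSpace ℝ (Fin d) => ut p.1 p.2)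
      (Set.Ioi 0 ×ˢ closure Ω))
    (hPDE : ∀ t > (0 : ℝ), ∀ x ∈ Ω,
      ut t x = μ * (1 - ∫ y in Ω, K x y * u t y) * u t x + laplacian (u t) x)
    (hNeumann : ∀ t > (0 : ℝ),
      ∫ x in Ω, laplacian (u t) x * (1 - 1 / u t x)
        = -∫ x in Ω, ‖gradient (u t) x‖ ^ 2 / (u t x) ^ 2) :
    AntitoneOn (fun t => ∫ x in Ω, (u t x - 1 - Real.log (u t x))) (Set.Ioi 0) := by
  have hΩ : IsCompact (closure Ω) := hΩbdd.isCompact_closure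
  have hΩm : MeasurableSet Ω := hΩopen.measurableSet
  have hu_ne : ∀ p ∈ Ioi 0 ×ˢ closure Ω, u p.1 p.2 ≠ 0 := fun p hp => (hu_pos _ hp.1 _ hp.2).ne'
  have hderiv : ∀ t ∈ Ioi (0 : ℝ), HasDerivAt (fun s => ∫ x in Ω, (u s x - 1 - Real.log (u s x)))
      (∫ x in Ω, (ut t x - ut t x / u t x)) t := fun t ht =>
    hasDerivAt_setIntegral_of_continuousOn_prod_s2 (F := fun s x => u s x - 1 - Real.log (u s x))
      (F' := fun s x => ut s x - ut s x / u s x) isOpen_Ioi hΩ hΩm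
      ((hu_cont.sub continuousOn_const).sub (hu_cont.log hu_ne))
      (hut_cont.sub (hut_cont.div hu_cont hu_ne))
      (fun s hs x hx => ((hut s hs x (subset_closure hx)).sub_const 1).sub
        ((hut s hs x (subset_closure hx)).log (hu_pos s hs x (subset_closure hx)).ne')) ht
  have hdissip : ∀ t ∈ Ioi (0 : ℝ), ∫ x in Ω, (ut t x - ut t x / u t x) ≤ 0 := by
    intro t ht
    have hu_t : ContinuousOn (u t) (closure Ω) := hu_cont.uncurry_left t ht
    refine setIntegral_sub_div_nonpos hΩ hΩm hKcont hKnorm hμ.le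
      (hKposdef _ ((hu_t.sub continuousOn_const).memLp_of_isCompact_closure hΩ hΩm 2))
      hu_t (hu_pos t ht) (hut_cont.uncurry_left t ht) (hPDE t ht) ?_
    rw [hNeumann t ht, neg_nonpos]
    exact integral_nonneg fun x => by positivity
  exact antitoneOn_of_hasDerivWithinAt_nonpos (convex_Ioi 0)
    (fun t ht => (hderiv t ht).continuousAt.continuousWithinAt)
    (fun t ht => (hderiv t (interior_subset ht)).hasDerivWithinAt)
    (fun t ht => hdissip t (interior_subset ht))

/-- `t ↦ ∫_Ω (u(t) - 1 - log u(t))` is a Lyapunov functional (non-increasing in time)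
for the non-local Fisher-KPP equation with a positive kernel. -/
theorem lyapunov_antitone
    {d : ℕ} (Ω : Set (EuclideanSpace ℝ (Fin d)))
    (hΩopen : IsOpen Ω) (hΩbdd : Bornology.IsBounded Ω) (hΩne : Ω.Nonempty)
    (μ : ℝ) (hμ : 0 < μ)
    (K : EuclideanSpace ℝ (Fin d) → EuclideanSpace ℝ (Fin d) → ℝ)
    (hKcont : ContinuousOn (fun p : EuclideanSpace ℝ (Fin d) × EuclideanSpace ℝ (Fin d) =>
      K p.1 p.2) (closure Ω ×ˢ closure Ω))
    (hKnorm : ∀ x ∈ Ω, ∫ y in Ω, K x y = 1)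
    (hKposdef : ∀ f : EuclideanSpace ℝ (Fin d) → ℝ, MemLp f 2 (volume.restrict Ω) →
      0 ≤ ∫ x in Ω, ∫ y in Ω, K x y * f x * f y)
    (u ut : ℝ → EuclideanSpace ℝ (Fin d) → ℝ)
    (hu_cont : ContinuousOn (fun p : ℝ × EuclideanSpace ℝ (Fin d) => u p.1 p.2)
      (Set.Ioi 0 ×ˢ closure Ω))
    (hu_pos : ∀ t > (0 : ℝ), ∀ x ∈ closure Ω, 0 < u t x)
    (hut : ∀ t > (0 : ℝ), ∀ x ∈ closure Ω, HasDerivAt (fun s => u s x) (ut t x) t)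
    (hut_cont : ContinuousOn (fun p : ℝ × EuclideanSpace ℝ (Fin d) => ut p.1 p.2)
      (Set.Ioi 0 ×ˢ closure Ω))
    (hu_smooth : ∀ t > (0 : ℝ), ContDiffOn ℝ 2 (u t) Ω)
    (hPDE : ∀ t > (0 : ℝ), ∀ x ∈ Ω,
      ut t x = μ * (1 - ∫ y in Ω, K x y * u t y) * u t x + laplacian (u t) x)
    (hNeumann : ∀ t > (0 : ℝ),
      ∫ x in Ω, laplacian (u t) x * (1 - 1 / u t x)
        = -∫ x in Ω, ‖gradient (u t) x‖ ^ 2 / (u t x) ^ 2) :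
    AntitoneOn (fun t => ∫ x in Ω, (u t x - 1 - Real.log (u t x))) (Set.Ioi 0) :=
  lyapunov_antitone_general Ω hΩopen hΩbdd μ hμ K hKcont hKnorm hKposdef u ut hu_cont hu_pos hut
    hut_cont hPDE hNeumann
end

section
/- Let Ω ⊆ ℝ^d be a nonempty bounded open set. Let (u_k) be a sequence of continuous positive functions on closure(Ω) that is uniformly equicontinuous on closure(Ω). If ∫_Ω (u_k(x) − 1 − log u_k(x)) dx → 0 as k → ∞, then u_k → 1 uniformly on closure(Ω). -/
/-!
The integrand `H(w) = w - 1 - log w` is nonnegative, vanishes only at `w = 1`, and grows as `w`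
moves away from `1`. If `u_k(x)` is `ε`-far from `1`, equicontinuity keeps `u_k` at least `ε/2`-far
from `1` on `Ω ∩ B(x, δ)` with `δ` independent of `k` and `x`, so the integral of `H(u_k)` is at
least `min (H(1 + ε/2)) (H(1 - ε/2))` times the measure of that set. By compactness of `closure Ω`
these measures are bounded below uniformly in `x`, which contradicts `∫_Ω H(u_k) → 0`.
-/

open MeasureTheory Filter Metric Set Real

namespace Real

lemma sub_one_sub_log_nonneg {w : ℝ} (hw : 0 < w) : 0 ≤ w - 1 - log w := by
  linarith [log_le_sub_one_of_pos hw]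

lemma sub_one_sub_log_pos {w : ℝ} (hw : 0 < w) (hw1 : w ≠ 1) : 0 < w - 1 - log w := by
  linarith [log_lt_sub_one_of_pos hw hw1]

/-- The tangent line inequality for the convex function `w ↦ w - 1 - log w` at `b`. -/
lemma mul_one_sub_inv_le_sub_one_sub_log_sub {a b : ℝ} (ha : 0 < a) (hb : 0 < b) :
    (a - b) * (1 - b⁻¹) ≤ (a - 1 - log a) - (b - 1 - log b) := by
  have hlog : log a - log b ≤ a / b - 1 := by
    rw [← log_div ha.ne' hb.ne']
    exact log_le_sub_one_of_pos (div_pos ha hb)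
  have hab : (a - b) * (1 - b⁻¹) = a - b - (a / b - 1) := by field_simp
  linarith

lemma sub_one_sub_log_le_of_one_le_of_le {a b : ℝ} (hb : 1 ≤ b) (hba : b ≤ a) :
    b - 1 - log b ≤ a - 1 - log a := by
  have hb0 : 0 < b := one_pos.trans_le hb
  have hfac : 0 ≤ (a - b) * (1 - b⁻¹) :=
    mul_nonneg (sub_nonneg.2 hba) (sub_nonneg.2 (inv_le_one_of_one_le₀ hb))
  linarith [mul_one_sub_inv_le_sub_one_sub_log_sub (hb0.trans_le hba) hb0]

lemma sub_one_sub_log_le_of_pos_of_le_of_le_one {a b : ℝ} (ha : 0 < a) (hab : a ≤ b)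
    (hb : b ≤ 1) : b - 1 - log b ≤ a - 1 - log a := by
  have hb0 : 0 < b := ha.trans_le hab
  have hfac : 0 ≤ (a - b) * (1 - b⁻¹) :=
    mul_nonneg_of_nonpos_of_nonpos (sub_nonpos.2 hab) (sub_nonpos.2 (one_le_inv₀ hb0 |>.2 hb))
  linarith [mul_one_sub_inv_le_sub_one_sub_log_sub ha hb0]

lemma min_sub_one_sub_log_le {η w : ℝ} (hη : 0 ≤ η) (hw : 0 < w) (hηw : η ≤ |w - 1|) :
    min (1 + η - 1 - log (1 + η)) (1 - η - 1 - log (1 - η)) ≤ w - 1 - log w := by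
  rcases le_abs'.1 hηw with hlow | hhigh
  · exact (min_le_right _ _).trans
      (sub_one_sub_log_le_of_pos_of_le_of_le_one hw (by linarith) (by linarith))
  · exact (min_le_left _ _).trans (sub_one_sub_log_le_of_one_le_of_le (by linarith) (by linarith))

lemma min_sub_one_sub_log_pos {η : ℝ} (hη₀ : 0 < η) (hη₁ : η < 1) :
    0 < min (1 + η - 1 - log (1 + η)) (1 - η - 1 - log (1 - η)) :=
  lt_min (sub_one_sub_log_pos (by linarith) (by linarith))
    (sub_one_sub_log_pos (by linarith) (by linarith))

end Real

section MetricMeasure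

variable {X : Type*} [MeasurableSpace X] {μ : Measure X} {s : Set X}

lemma mul_measureReal_le_setIntegral_of_le {f : X → ℝ} {t : Set X} {c : ℝ} (hs : MeasurableSet s)
    (ht : MeasurableSet t) (hts : t ⊆ s) (hμt : μ t ≠ ⊤) (hf : IntegrableOn f s μ)
    (hf₀ : ∀ x ∈ s, 0 ≤ f x) (hc : ∀ x ∈ t, c ≤ f x) : c * μ.real t ≤ ∫ x in s, f x ∂μ :=
  calc c * μ.real t ≤ ∫ x in t, f x ∂μ := setIntegral_ge_of_const_le_real ht hμt hc (hf.mono_set hts)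
    _ ≤ ∫ x in s, f x ∂μ :=
      setIntegral_mono_set hf ((ae_restrict_iff' hs).2 (ae_of_all _ hf₀)) hts.eventuallyLE

variable [MetricSpace X]

lemma exists_pos_forall_le_measureReal_inter_ball [μ.IsOpenPosMeasure]
    [IsFiniteMeasureOnCompacts μ] (hs : IsOpen s) (hsc : IsCompact (closure s)) {δ : ℝ}
    (hδ : 0 < δ) : ∃ m > 0, ∀ x ∈ closure s, m ≤ μ.real (s ∩ ball x δ) := by
  obtain ⟨t, ht, hcover⟩ := hsc.elim_nhds_subcover (fun y ↦ ball y (δ / 2))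
    fun y _ ↦ ball_mem_nhds y (half_pos hδ)
  -- capped at `1` so that `m` is finite also when `t` is empty
  set m := min (t.inf fun y ↦ μ (s ∩ ball y (δ / 2))) 1
  have hm : 0 < m := by
    refine lt_min ((Finset.lt_inf_iff ENNReal.zero_lt_top).2 fun y hy ↦ ?_) one_pos
    obtain ⟨z, hz⟩ := mem_closure_iff_nhds.1 (ht y hy) _ (ball_mem_nhds y (half_pos hδ))
    exact (hs.inter isOpen_ball).measure_pos μ ⟨z, hz.2, hz.1⟩
  have hm_ne_top : m ≠ ⊤ := ((min_le_right _ _).trans_lt ENNReal.one_lt_top).ne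
  refine ⟨m.toReal, ENNReal.toReal_pos hm.ne' hm_ne_top, fun x hx ↦ ?_⟩
  obtain ⟨y, hy, hxy⟩ := mem_iUnion₂.1 (hcover hx)
  have hball : ball y (δ / 2) ⊆ ball x δ := by
    simpa using ball_subset_ball' (by linarith [mem_ball'.1 hxy] : δ / 2 + dist y x ≤ δ)
  have hfin : μ (s ∩ ball x δ) ≠ ⊤ :=
    ((measure_mono (inter_subset_left.trans subset_closure)).trans_lt hsc.measure_lt_top).ne
  exact ENNReal.toReal_mono hfin <| (min_le_left _ _).trans <|
    (Finset.inf_le hy).trans (measure_mono (inter_subset_inter_right s hball))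

lemma mul_measureReal_le_setIntegral_sub_one_sub_log [OpensMeasurableSpace X]
    [IsFiniteMeasureOnCompacts μ] (hs : IsOpen s) (hsc : IsCompact (closure s)) {v : X → ℝ}
    (hv : ContinuousOn v (closure s)) (hv₀ : ∀ x ∈ closure s, 0 < v x) {η δ : ℝ} (hη : 0 ≤ η)
    {x : X} (hvx : 2 * η ≤ |v x - 1|) (hδ : ∀ y ∈ s ∩ ball x δ, |v x - v y| < η) :
    min (1 + η - 1 - log (1 + η)) (1 - η - 1 - log (1 - η)) * μ.real (s ∩ ball x δ) ≤
      ∫ y in s, (v y - 1 - log (v y)) ∂μ := by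
  have hH : ContinuousOn (fun y ↦ v y - 1 - log (v y)) (closure s) :=
    (hv.sub continuousOn_const).sub (hv.log fun y hy ↦ (hv₀ y hy).ne')
  refine mul_measureReal_le_setIntegral_of_le hs.measurableSet
    (hs.inter isOpen_ball).measurableSet inter_subset_left
    ((measure_mono (inter_subset_left.trans subset_closure)).trans_lt hsc.measure_lt_top).ne
    ((hH.integrableOn_compact hsc).mono_set subset_closure)
    (fun y hy ↦ sub_one_sub_log_nonneg (hv₀ y (subset_closure hy))) fun y hy ↦ ?_
  refine min_sub_one_sub_log_le hη (hv₀ y (subset_closure hy.1)) ?_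
  have := abs_sub_abs_le_abs_sub (v x - 1) (v y - 1)
  rw [sub_sub_sub_cancel_right] at this
  linarith [hδ y hy]

theorem tendstoUniformlyOn_one_of_tendsto_setIntegral_sub_one_sub_log [OpensMeasurableSpace X]
    [μ.IsOpenPosMeasure] [IsFiniteMeasureOnCompacts μ] {ι : Type*} {l : Filter ι}
    (hs : IsOpen s) (hsc : IsCompact (closure s)) {u : ι → X → ℝ}
    (hu : ∀ i, ContinuousOn (u i) (closure s)) (hu₀ : ∀ i, ∀ x ∈ closure s, 0 < u i x)
    (hequi : ∀ ε > (0 : ℝ), ∃ δ > (0 : ℝ), ∀ i, ∀ x ∈ closure s, ∀ y ∈ closure s,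
      dist x y < δ → |u i x - u i y| < ε)
    (hV : Tendsto (fun i ↦ ∫ x in s, (u i x - 1 - log (u i x)) ∂μ) l (nhds 0)) :
    TendstoUniformlyOn u (fun _ ↦ 1) l (closure s) := by
  rw [Metric.tendstoUniformlyOn_iff]
  intro ε hε
  obtain ⟨η, hη₀, hη₁, hηε⟩ : ∃ η : ℝ, 0 < η ∧ η < 1 ∧ 2 * η < ε :=
    ⟨min ε 1 / 3, by positivity, by linarith [min_le_right ε 1], by linarith [min_le_left ε 1]⟩
  set c := min (1 + η - 1 - log (1 + η)) (1 - η - 1 - log (1 - η))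
  have hc : 0 < c := min_sub_one_sub_log_pos hη₀ hη₁
  obtain ⟨δ, hδ, hequiδ⟩ := hequi η hη₀
  obtain ⟨m, hm, hmδ⟩ := exists_pos_forall_le_measureReal_inter_ball (μ := μ) hs hsc hδ
  filter_upwards [(tendsto_order.1 hV).2 (c * m) (mul_pos hc hm)] with i hi x hx
  by_contra! hfar
  rw [dist_comm, Real.dist_eq] at hfar
  have hlow := mul_measureReal_le_setIntegral_sub_one_sub_log (μ := μ) hs hsc (hu i) (hu₀ i)
    hη₀.le (hηε.le.trans hfar) fun y hy ↦
      hequiδ i x hx y (subset_closure hy.1) (by rw [dist_comm]; exact hy.2)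
  linarith [mul_le_mul_of_nonneg_left (hmδ x hx) hc.le]

end MetricMeasure

theorem lyapunov_to_zero_implies_uniform_convergence_to_one_general
    {d : ℕ} (Ω : Set (EuclideanSpace ℝ (Fin d)))
    (hΩopen : IsOpen Ω) (hΩbdd : Bornology.IsBounded Ω)
    (uk : ℕ → EuclideanSpace ℝ (Fin d) → ℝ)
    (huk_cont : ∀ k, ContinuousOn (uk k) (closure Ω))
    (huk_pos : ∀ k, ∀ x ∈ closure Ω, 0 < uk k x)
    (hequi : ∀ ε > (0 : ℝ), ∃ δ > (0 : ℝ), ∀ k, ∀ x ∈ closure Ω, ∀ y ∈ closure Ω,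
      dist x y < δ → |uk k x - uk k y| < ε)
    (hV : Tendsto (fun k => ∫ x in Ω, (uk k x - 1 - Real.log (uk k x))) atTop (nhds 0)) :
    TendstoUniformlyOn uk (fun _ => (1 : ℝ)) atTop (closure Ω) :=
  tendstoUniformlyOn_one_of_tendsto_setIntegral_sub_one_sub_log hΩopen hΩbdd.isCompact_closure
    huk_cont huk_pos hequi hV

/-- If a uniformly equicontinuous sequence of positive continuous functions on `closure Ω`
has Lyapunov functional `∫_Ω (u_k - 1 - log u_k)` tending to `0`, then `u_k → 1` uniformly
on `closure Ω`. -/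
theorem lyapunov_to_zero_implies_uniform_convergence_to_one
    {d : ℕ} (Ω : Set (EuclideanSpace ℝ (Fin d)))
    (hΩopen : IsOpen Ω) (hΩbdd : Bornology.IsBounded Ω) (hΩne : Ω.Nonempty)
    (uk : ℕ → EuclideanSpace ℝ (Fin d) → ℝ)
    (huk_cont : ∀ k, ContinuousOn (uk k) (closure Ω))
    (huk_pos : ∀ k, ∀ x ∈ closure Ω, 0 < uk k x)
    (hequi : ∀ ε > (0 : ℝ), ∃ δ > (0 : ℝ), ∀ k, ∀ x ∈ closure Ω, ∀ y ∈ closure Ω,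
      dist x y < δ → |uk k x - uk k y| < ε)
    (hV : Tendsto (fun k => ∫ x in Ω, (uk k x - 1 - Real.log (uk k x))) atTop (nhds 0)) :
    TendstoUniformlyOn uk (fun _ => (1 : ℝ)) atTop (closure Ω) :=
  lyapunov_to_zero_implies_uniform_convergence_to_one_general Ω hΩopen hΩbdd uk huk_cont huk_pos
    hequi hV
end
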